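/- arXiv:math/0606795 — 8 statements merged into one kernel-verified Lean document; each statement's English description precedes it below -/
import Mathlib

section
/- Let B be a commutative ring and ⊕_{n≥0} I_n W^n ⊆ B[W] a Rees algebra. Define I'_k = Σ_{r≥k} I_r. Then {I'_k} again satisfies I'_0 = B and I'_k · I'_s ⊆ I'_{k+s}, the filtration is decreasing (I'_k ⊇ I'_{k+1}), and the ring extension ⊕ I_k W^k ⊆ ⊕ I'_k W^k is integral. -/
/-!
If `g ∈ I r` with `n ≤ r`, then `g ^ n ∈ I (n * r)`, hence `g ^ r ∈ I (n * r)` as well, so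
`(g W ^ n) ^ r = g ^ r W ^ (n r)` lies in `I (n r) W ^ (n r)`: the monomial `g W ^ n` is integral
over `⊕ Iₖ Wᵏ`. Since `I'ₙ` is the sum of the `I r` with `r ≥ n`, and integral elements form a
subalgebra, all of `⊕ I'ₖ Wᵏ` is integral.
-/

open Polynomial

/-- The Rees algebra of a filtration `I` of ideals of `B`: the graded
`B`-subalgebra `⊕ₙ Iₙ Wⁿ` of the polynomial ring `B[W]`. -/
noncomputable def ReesAlg {B : Type*} [CommRing B] (I : ℕ → Ideal B) : Subalgebra B (Polynomial B) :=
  Algebra.adjoin B {p | ∃ n : ℕ, ∃ g ∈ I n, p = C g * X ^ n}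

section

variable {B : Type*} [CommRing B] {I : ℕ → Ideal B}

noncomputable def tailSup (I : ℕ → Ideal B) (k : ℕ) : Ideal B :=
  ⨆ r ∈ Set.Ici k, I r

lemma le_tailSup {k r : ℕ} (h : k ≤ r) : I r ≤ tailSup I k :=
  le_iSup₂ (f := fun r (_ : r ∈ Set.Ici k) => I r) r h

lemma tailSup_zero (h0 : I 0 = ⊤) : tailSup I 0 = ⊤ :=
  top_le_iff.mp (h0 ▸ le_tailSup le_rfl)

lemma tailSup_antitone : Antitone (tailSup I) :=
  fun _ _ hkl => biSup_mono fun _ hr => le_trans hkl hr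

lemma tailSup_mul_le (hmul : ∀ k s : ℕ, I k * I s ≤ I (k + s)) (k s : ℕ) :
    tailSup I k * tailSup I s ≤ tailSup I (k + s) := by
  simp only [tailSup, Ideal.iSup_mul, Ideal.mul_iSup]
  exact iSup₂_le fun t ht => iSup₂_le fun r hr =>
    (hmul r t).trans (le_tailSup (add_le_add hr ht))

lemma pow_succ_mem_of_mul_le (hmul : ∀ k s : ℕ, I k * I s ≤ I (k + s)) {g : B} {r : ℕ}
    (hg : g ∈ I r) (m : ℕ) : g ^ (m + 1) ∈ I ((m + 1) * r) := by
  induction m with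
  | zero => simpa using hg
  | succ m ih =>
    rw [pow_succ, add_mul _ 1 r, one_mul]
    exact hmul _ _ (Ideal.mul_mem_mul ih hg)

namespace ReesAlg

lemma monomial_mem {n : ℕ} {g : B} (hg : g ∈ I n) : monomial n g ∈ ReesAlg I :=
  Algebra.subset_adjoin ⟨n, g, hg, C_mul_X_pow_eq_monomial.symm⟩

lemma isIntegral_of_mem {p : B[X]} (hp : p ∈ ReesAlg I) : IsIntegral (ReesAlg I) p :=
  isIntegral_algebraMap (x := (⟨p, hp⟩ : ReesAlg I))

lemma isIntegral_monomial_of_le (hmul : ∀ k s : ℕ, I k * I s ≤ I (k + s)) {n r : ℕ} {g : B}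
    (hnr : n ≤ r) (hg : g ∈ I r) : IsIntegral (ReesAlg I) (monomial n g) := by
  cases n with
  | zero => exact isIntegral_of_mem (by simpa using (ReesAlg I).algebraMap_mem g)
  | succ m =>
    have hpow : g ^ r ∈ I ((m + 1) * r) := by
      simpa only [← pow_add, Nat.sub_add_cancel hnr] using
        Ideal.mul_mem_left _ (g ^ (r - (m + 1))) (pow_succ_mem_of_mul_le hmul hg m)
    refine IsIntegral.of_pow (by omega : 0 < r) (isIntegral_of_mem ?_)
    rw [monomial_pow]
    exact monomial_mem hpow

lemma le_integralClosure (hmul : ∀ k s : ℕ, I k * I s ≤ I (k + s)) :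
    ReesAlg (tailSup I) ≤ (integralClosure (ReesAlg I) B[X]).restrictScalars B := by
  refine Algebra.adjoin_le ?_
  rintro _ ⟨n, g, hg, rfl⟩
  rw [C_mul_X_pow_eq_monomial]
  suffices tailSup I n ≤ (Subalgebra.toSubmodule
      ((integralClosure (ReesAlg I) B[X]).restrictScalars B)).comap (monomial n) from this hg
  exact iSup₂_le fun r hr g hg => isIntegral_monomial_of_le hmul hr hg

end ReesAlg

end

theorem stmt_1 {B : Type*} [CommRing B] (I : ℕ → Ideal B)
    (h0 : I 0 = ⊤) (hmul : ∀ k s : ℕ, I k * I s ≤ I (k + s))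
    (I' : ℕ → Ideal B) (hI' : ∀ k, I' k = ⨆ r ∈ Set.Ici k, I r) :
    I' 0 = ⊤ ∧ (∀ k s : ℕ, I' k * I' s ≤ I' (k + s)) ∧
    (∀ k : ℕ, I' (k + 1) ≤ I' k) ∧
    (∀ p ∈ ReesAlg I', IsIntegral (ReesAlg I) p) := by
  obtain rfl : I' = tailSup I := funext hI'
  exact ⟨tailSup_zero h0, tailSup_mul_le hmul, fun k => tailSup_antitone k.le_succ,
    fun p hp => ReesAlg.le_integralClosure hmul hp⟩
end

section
/- Let B be a commutative ring, ⊕_{n≥0} I_n W^n ⊆ B[W] a Rees algebra generated as a B-algebra by finitely many homogeneous elements g_{n_1}W^{n_1}, …, g_{n_m}W^{n_m} with all n_i > 0. If N is a common multiple of n_1, …, n_m, then the extension ⊕_{k≥0} I_N^k W^{kN} ⊆ ⊕_{n≥0} I_n W^n is integral, where ⊕ I_N^k W^{kN} is the ordinary Rees ring of the ideal I_N inside B[W^N]. -/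
/-! Each generator `gᵢ W^{nᵢ}` has a power `(gᵢ W^{nᵢ})^{N/nᵢ} = gᵢ^{N/nᵢ} W^N`, and
`gᵢ^{N/nᵢ} ∈ I_{nᵢ}^{N/nᵢ} ⊆ I_N`, so this power lies in the Rees ring of `I_N`: every
generator is a root of a monic `T^{N/nᵢ} - c`. Integral elements form a subalgebra, so the
whole algebra they generate is integral. -/

set_option synthInstance.maxHeartbeats 400000

open Polynomial

section

variable {B : Type*} [CommRing B]

/-- The Rees ring `⊕ₖ Jᵏ W^{kN}` of `J` in the variable `W^N`, as a subalgebra of `B[W]`. -/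
noncomputable def reesRing (J : Ideal B) (N : ℕ) : Subalgebra B B[X] :=
  Algebra.adjoin B ((fun a : B => C a * X ^ N) '' (J : Set B))

theorem C_mul_X_pow_mem_reesRing {J : Ideal B} {a : B} (ha : a ∈ J) (N : ℕ) :
    C a * X ^ N ∈ reesRing J N :=
  Algebra.subset_adjoin ⟨a, ha, rfl⟩

theorem pow_mem_of_mul_le {I : ℕ → Ideal B} (hmul : ∀ k s : ℕ, I k * I s ≤ I (k + s))
    {s : ℕ} {x : B} (hx : x ∈ I s) {k : ℕ} (hk : 0 < k) : x ^ k ∈ I (s * k) := by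
  induction k, hk using Nat.le_induction with
  | base => simpa using hx
  | succ k _ ih =>
    rw [pow_succ, Nat.mul_succ]
    exact hmul _ _ (Ideal.mul_mem_mul ih hx)

theorem Subalgebra.isIntegral_of_pow_mem {R S : Type*} [CommRing R] [CommRing S] [Algebra R S]
    (A : Subalgebra R S) {x : S} {k : ℕ} (hk : 0 < k) (hx : x ^ k ∈ A) : IsIntegral A x :=
  IsIntegral.of_pow hk (isIntegral_algebraMap (x := (⟨x ^ k, hx⟩ : A)))

theorem isIntegral_C_mul_X_pow_over_reesRing {I : ℕ → Ideal B}
    (hmul : ∀ k s : ℕ, I k * I s ≤ I (k + s)) {g : B} {n k N : ℕ} (hg : g ∈ I n)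
    (hN : N = n * k) (hk : 0 < k) : IsIntegral (reesRing (I N) N) (C g * X ^ n) := by
  refine (reesRing (I N) N).isIntegral_of_pow_mem hk ?_
  rw [mul_pow, ← C_pow, ← pow_mul, ← hN]
  exact C_mul_X_pow_mem_reesRing (hN ▸ pow_mem_of_mul_le hmul hg hk) N

end

theorem stmt_2_general {B : Type*} [CommRing B] (I : ℕ → Ideal B)
    (hmul : ∀ k s : ℕ, I k * I s ≤ I (k + s))
    (m : ℕ) (g : Fin m → B) (n : Fin m → ℕ)
    (hgI : ∀ i, g i ∈ I (n i))
    (hgen : ReesAlg I = Algebra.adjoin B {p | ∃ i : Fin m, p = C (g i) * X ^ (n i)})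
    (N : ℕ) (hN : 0 < N) (hdvd : ∀ i, n i ∣ N) :
    ∀ p ∈ ReesAlg I,
      IsIntegral (Algebra.adjoin B ((fun a : B => C a * X ^ N) '' (I N : Set B))) p := by
  intro p hp
  rw [hgen] at hp
  refine Algebra.adjoin_le (S := (integralClosure (reesRing (I N) N) B[X]).restrictScalars B)
    ?_ hp
  rintro _ ⟨i, rfl⟩
  obtain ⟨k, hk⟩ := hdvd i
  exact isIntegral_C_mul_X_pow_over_reesRing hmul (hgI i) hk
    (Nat.pos_of_ne_zero fun hk0 => hN.ne' (by simpa [hk0] using hk))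

/-- If a Rees algebra `⊕ Iₙ Wⁿ` is generated by finitely many homogeneous elements
`gᵢ W^{nᵢ}` with `nᵢ > 0`, and `N` is a common multiple of the `nᵢ`, then the Rees
algebra is integral over the Rees ring `⊕ I_N^k W^{kN}` of the ideal `I_N` in `B[W^N]`. -/
theorem stmt_2 {B : Type*} [CommRing B] (I : ℕ → Ideal B)
    (h0 : I 0 = ⊤) (hmul : ∀ k s : ℕ, I k * I s ≤ I (k + s))
    (m : ℕ) (g : Fin m → B) (n : Fin m → ℕ) (hn : ∀ i, 0 < n i)
    (hgI : ∀ i, g i ∈ I (n i))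
    (hgen : ReesAlg I = Algebra.adjoin B {p | ∃ i : Fin m, p = C (g i) * X ^ (n i)})
    (N : ℕ) (hN : 0 < N) (hdvd : ∀ i, n i ∣ N) :
    ∀ p ∈ ReesAlg I,
      IsIntegral (Algebra.adjoin B ((fun a : B => C a * X ^ N) '' (I N : Set B))) p :=
  stmt_2_general I hmul m g n hgI hgen N hN hdvd
end

section
/- Let S be a commutative ring, B = S[X], and Δ^α the Hasse–Schmidt derivatives on B. Let 𝓕 = {g_{n_i} W^{n_i} : 1 ≤ i ≤ m, n_i > 0} be a finite subset of B[W] closed under the two operations: (a) if g W^n ∈ 𝓕 and 0 < n' ≤ n then g W^{n'} ∈ 𝓕; (b) if g W^n ∈ 𝓕 and 0 ≤ α < n then Δ^α(g) W^{n−α} ∈ 𝓕. Then the B-subalgebra of B[W] generated by 𝓕, written ⊕ I_k W^k, satisfies: (i) I_k ⊇ I_{k+1} for all k, and (ii) Δ^α(I_n) ⊆ I_{n−α} for all 0 ≤ α ≤ n. -/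
/-!
The generators are monomials `g W^n`, so (i) and (ii) can be proved as invariants of induction
over `A = adjoin 𝓕`: for every `f ∈ A`, `f_{k+1} W^k ∈ A` and `Δ^α(f_n) W^{n-α} ∈ A` for all
`α` (for `α > n` the truncated weight `n - α` is `0` and the claim is trivial). On generators
these are the closure conditions (a) and (b). They pass to products because `A` contains the
homogeneous components of its elements and `W`-degrees add; for (ii) the Leibniz rule
`Δ^α(gh) = Σ_{a+b=α} Δ^a g · Δ^b h` produces terms of weight `(i - a) + (j - b) ≥ n - α`,
which (i) brings down to weight `n - α`.
-/

open Polynomial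

namespace Polynomial

section Monomials

variable {R : Type*} [CommSemiring R]

noncomputable def adjoinMonomials (s : Set (R × ℕ)) : Subalgebra R R[X] :=
  Algebra.adjoin R ((fun p : R × ℕ => monomial p.2 p.1) '' s)

variable {s : Set (R × ℕ)}

theorem monomial_mem_adjoinMonomials {p : R × ℕ} (hp : p ∈ s) :
    monomial p.2 p.1 ∈ adjoinMonomials s :=
  Algebra.subset_adjoin ⟨p, hp, rfl⟩

theorem monomial_zero_mem (A : Subalgebra R R[X]) (a : R) : monomial 0 a ∈ A := by
  simpa [monomial_zero_left] using A.algebraMap_mem a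

theorem monomial_coeff_mem_adjoinMonomials {f : R[X]}
    (hf : f ∈ adjoinMonomials s) (k : ℕ) : monomial k (f.coeff k) ∈ adjoinMonomials s := by
  induction hf using Algebra.adjoin_induction generalizing k with
  | mem x hx =>
    obtain ⟨p, hp, rfl⟩ := hx
    by_cases hk : p.2 = k
    · subst hk
      simpa using monomial_mem_adjoinMonomials hp
    · simp [coeff_monomial, hk]
  | algebraMap r =>
    by_cases hk : k = 0
    · subst hk; exact monomial_zero_mem _ _
    · simp [coeff_C, hk]
  | add x y _ _ ihx ihy => simpa only [coeff_add, map_add] using add_mem (ihx k) (ihy k)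
  | mul x y _ _ ihx ihy =>
    rw [coeff_mul, map_sum]
    refine sum_mem fun ij hij => ?_
    rw [← Finset.HasAntidiagonal.mem_antidiagonal.mp hij, ← monomial_mul_monomial]
    exact mul_mem (ihx ij.1) (ihy ij.2)

theorem monomial_coeff_succ_mem_adjoinMonomials
    (hs : ∀ p ∈ s, ∀ n, 0 < n → n ≤ p.2 → (p.1, n) ∈ s) {f : R[X]}
    (hf : f ∈ adjoinMonomials s) (k : ℕ) :
    monomial k (f.coeff (k + 1)) ∈ adjoinMonomials s := by
  induction hf using Algebra.adjoin_induction generalizing k with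
  | mem x hx =>
    obtain ⟨p, hp, rfl⟩ := hx
    by_cases hk : p.2 = k + 1
    · rw [coeff_monomial, if_pos hk]
      rcases Nat.eq_zero_or_pos k with rfl | hk0
      · exact monomial_zero_mem _ _
      · exact monomial_mem_adjoinMonomials (hs p hp k hk0 (by omega))
    · simp [coeff_monomial, hk]
  | algebraMap r => simp
  | add x y _ _ ihx ihy => simpa only [coeff_add, map_add] using add_mem (ihx k) (ihy k)
  | mul x y _ hy ihx ihy =>
    rw [coeff_mul, Finset.Nat.sum_antidiagonal_succ, map_add, map_sum]
    refine add_mem ?_ (sum_mem fun ij hij => ?_)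
    · simpa only [monomial_mul_monomial, zero_add] using
        mul_mem (monomial_zero_mem _ (x.coeff 0)) (ihy k)
    · rw [← Finset.HasAntidiagonal.mem_antidiagonal.mp hij, ← monomial_mul_monomial]
      exact mul_mem (ihx ij.1) (monomial_coeff_mem_adjoinMonomials hy ij.2)

theorem monomial_mem_adjoinMonomials_of_succ
    (hs : ∀ p ∈ s, ∀ n, 0 < n → n ≤ p.2 → (p.1, n) ∈ s) {a : R} {k : ℕ}
    (h : monomial (k + 1) a ∈ adjoinMonomials s) : monomial k a ∈ adjoinMonomials s := by
  simpa using monomial_coeff_succ_mem_adjoinMonomials hs h k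

theorem monomial_mem_adjoinMonomials_of_le
    (hs : ∀ p ∈ s, ∀ n, 0 < n → n ≤ p.2 → (p.1, n) ∈ s) {a : R} {m n : ℕ}
    (h : monomial n a ∈ adjoinMonomials s) (hmn : m ≤ n) : monomial m a ∈ adjoinMonomials s := by
  induction n, hmn using Nat.le_induction with
  | base => exact h
  | succ n _ ih => exact ih (monomial_mem_adjoinMonomials_of_succ hs h)

end Monomials

section HasseDeriv

variable {S : Type*} [CommSemiring S] {s : Set (S[X] × ℕ)}

theorem monomial_hasseDeriv_coeff_mem_adjoinMonomials
    (hs : ∀ p ∈ s, ∀ n, 0 < n → n ≤ p.2 → (p.1, n) ∈ s)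
    (hΔ : ∀ p ∈ s, ∀ α < p.2, (hasseDeriv α p.1, p.2 - α) ∈ s) {f : S[X][X]}
    (hf : f ∈ adjoinMonomials s) (n α : ℕ) :
    monomial (n - α) (hasseDeriv α (f.coeff n)) ∈ adjoinMonomials s := by
  induction hf using Algebra.adjoin_induction generalizing n α with
  | mem x hx =>
    obtain ⟨p, hp, rfl⟩ := hx
    by_cases hn : p.2 = n
    · subst hn
      rw [coeff_monomial, if_pos rfl]
      by_cases hα : α < p.2
      · exact monomial_mem_adjoinMonomials (hΔ p hp α hα)
      · rw [Nat.sub_eq_zero_of_le (not_lt.mp hα)]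
        exact monomial_zero_mem _ _
    · simp [coeff_monomial, hn]
  | algebraMap r =>
    by_cases hn : n = 0
    · subst hn
      rw [Nat.zero_sub]
      exact monomial_zero_mem _ _
    · simp [coeff_C, hn]
  | add x y _ _ ihx ihy =>
    simpa only [coeff_add, map_add] using add_mem (ihx n α) (ihy n α)
  | mul x y _ _ ihx ihy =>
    rw [coeff_mul, map_sum, map_sum]
    refine sum_mem fun ij hij => ?_
    rw [hasseDeriv_mul, map_sum]
    refine sum_mem fun ab hab => ?_
    have hprod := mul_mem (ihx ij.1 ab.1) (ihy ij.2 ab.2)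
    rw [monomial_mul_monomial] at hprod
    refine monomial_mem_adjoinMonomials_of_le hs hprod ?_
    rw [Finset.HasAntidiagonal.mem_antidiagonal] at hij hab
    omega

end HasseDeriv

end Polynomial

theorem stmt_4_general (S : Type*) [CommRing S] (F : Finset ((Polynomial S) × ℕ))
    (ha : ∀ p ∈ F, ∀ n' : ℕ, 0 < n' → n' ≤ p.2 → (p.1, n') ∈ F)
    (hb : ∀ p ∈ F, ∀ α : ℕ, α < p.2 → (hasseDeriv α p.1, p.2 - α) ∈ F)
    (A : Subalgebra (Polynomial S) (Polynomial (Polynomial S)))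
    (hA : A = Algebra.adjoin (Polynomial S)
      ((fun p : (Polynomial S) × ℕ => (C p.1 * X ^ p.2 : Polynomial (Polynomial S))) '' F)) :
    (∀ (b : Polynomial S) (k : ℕ),
      (C b * X ^ (k + 1) : Polynomial (Polynomial S)) ∈ A → (C b * X ^ k : Polynomial (Polynomial S)) ∈ A) ∧
    (∀ (b : Polynomial S) (n α : ℕ), α ≤ n →
      (C b * X ^ n : Polynomial (Polynomial S)) ∈ A →
      (C (hasseDeriv α b) * X ^ (n - α) : Polynomial (Polynomial S)) ∈ A) := by
  have hA' : A = adjoinMonomials (F : Set (S[X] × ℕ)) := by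
    simp only [hA, adjoinMonomials, C_mul_X_pow_eq_monomial]
  simp only [C_mul_X_pow_eq_monomial, hA']
  refine ⟨fun b k h => monomial_mem_adjoinMonomials_of_succ ha h, fun b n α _ h => ?_⟩
  simpa using monomial_hasseDeriv_coeff_mem_adjoinMonomials ha hb h n α

/-- Theorem 2.7 ("IIth") of the paper: if a finite set `𝓕` of homogeneous elements
`g W^n` of `B[W]` (for `B = S[X]`) is closed under lowering of the weight and under
the Hasse–Schmidt operations `g W^n ↦ Δ^α(g) W^{n-α}`, then the `B`-subalgebra of
`B[W]` generated by `𝓕` is a Diff-algebra relative to `S`: its filtration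
`I_k = {b | b W^k ∈ A}` is decreasing and satisfies `Δ^α(I_n) ⊆ I_{n-α}`. -/
theorem stmt_4 (S : Type*) [CommRing S] (F : Finset ((Polynomial S) × ℕ))
    (hpos : ∀ p ∈ F, 0 < p.2)
    (ha : ∀ p ∈ F, ∀ n' : ℕ, 0 < n' → n' ≤ p.2 → (p.1, n') ∈ F)
    (hb : ∀ p ∈ F, ∀ α : ℕ, α < p.2 → (hasseDeriv α p.1, p.2 - α) ∈ F)
    (A : Subalgebra (Polynomial S) (Polynomial (Polynomial S)))
    (hA : A = Algebra.adjoin (Polynomial S)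
      ((fun p : (Polynomial S) × ℕ => (C p.1 * X ^ p.2 : Polynomial (Polynomial S))) '' F)) :
    (∀ (b : Polynomial S) (k : ℕ),
      (C b * X ^ (k + 1) : Polynomial (Polynomial S)) ∈ A → (C b * X ^ k : Polynomial (Polynomial S)) ∈ A) ∧
    (∀ (b : Polynomial S) (n α : ℕ), α ≤ n →
      (C b * X ^ n : Polynomial (Polynomial S)) ∈ A →
      (C (hasseDeriv α b) * X ^ (n - α) : Polynomial (Polynomial S)) ∈ A) :=
  stmt_4_general S F ha hb A hA
end

section
/- Let S be a commutative ring and B = S[X]. If an ideal I ⊆ B satisfies D(I) ⊆ I for every S-linear differential operator D on B (equivalently Δ^α(I) ⊆ I for all α ≥ 0, where Δ^α are the Hasse–Schmidt derivatives), then I is generated by elements of S, i.e. I = (I ∩ S)·B. -/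
open Polynomial

namespace Polynomial

variable {R : Type*} [Ring R] {I : Ideal R[X]}

theorem C_leadingCoeff_mem_of_hasseDeriv_mem (hI : ∀ k, ∀ f ∈ I, hasseDeriv k f ∈ I)
    {f : R[X]} (hf : f ∈ I) : C f.leadingCoeff ∈ I :=
  hasseDeriv_natDegree_eq_C (f := f) ▸ hI _ f hf

theorem eraseLead_mem_of_hasseDeriv_mem (hI : ∀ k, ∀ f ∈ I, hasseDeriv k f ∈ I)
    {f : R[X]} (hf : f ∈ I) : f.eraseLead ∈ I := by
  rw [← self_sub_C_mul_X_pow, ← X_pow_mul]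
  exact I.sub_mem hf (I.mul_mem_left _ (C_leadingCoeff_mem_of_hasseDeriv_mem hI hf))

-- Peel off leading terms: each is in `I`, and what remains has strictly smaller support.
theorem C_coeff_mem_of_hasseDeriv_mem (hI : ∀ k, ∀ f ∈ I, hasseDeriv k f ∈ I)
    {f : R[X]} (hf : f ∈ I) (n : ℕ) : C (f.coeff n) ∈ I := by
  induction hc : f.support.card using Nat.strong_induction_on generalizing f with
  | _ c ih =>
    by_cases h0 : f = 0
    · simp [h0]
    obtain rfl | hn := eq_or_ne n f.natDegree
    · exact C_leadingCoeff_mem_of_hasseDeriv_mem hI hf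
    · rw [← eraseLead_coeff_of_ne n hn]
      exact ih _ (hc ▸ eraseLead_support_card_lt h0) (eraseLead_mem_of_hasseDeriv_mem hI hf) rfl

end Polynomial

/-- An ideal of `B = S[X]` stable under all Hasse–Schmidt derivatives (equivalently,
under all `S`-linear differential operators) is generated by its elements from `S`,
i.e. `I = (I ∩ S)·B`. -/
theorem stmt_6 (S : Type*) [CommRing S] (I : Ideal (Polynomial S))
    (hstab : ∀ (α : ℕ), ∀ f ∈ I, hasseDeriv α f ∈ I) :
    I = Ideal.map (C : S →+* Polynomial S)
          (Ideal.comap (C : S →+* Polynomial S) I) :=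
  le_antisymm
    (fun _ hf => Ideal.mem_map_C_iff.2 fun n => C_coeff_mem_of_hasseDeriv_mem hstab hf n)
    Ideal.map_comap_le
end

section
/- Let S be a commutative ring and B = S[X]. An ideal I ⊆ B satisfies X^α Δ^α(I) ⊆ I for all α ≥ 0 if and only if I is a monomial-homogeneous ideal in the following sense: whenever f = Σ_r s_r X^r ∈ I (with s_r ∈ S), each individual term s_r X^r ∈ I. -/
open Polynomial

/-- An ideal `I ⊆ S[X]` satisfies `X^α Δ^α(I) ⊆ I` for all `α` if and only if it is
monomial-homogeneous: whenever `f ∈ I`, each individual term `(coeff r f)·X^r` lies in `I`. -/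
theorem stmt_8 (S : Type*) [CommRing S] (I : Ideal (Polynomial S)) :
    (∀ (α : ℕ), ∀ f ∈ I, (X : Polynomial S) ^ α * hasseDeriv α f ∈ I) ↔
    (∀ f ∈ I, ∀ r : ℕ, (C (f.coeff r) * X ^ r : Polynomial S) ∈ I) := by
  constructor
  · intro h
    suffices H : ∀ n, ∀ f ∈ I, f.natDegree ≤ n → ∀ r, (C (f.coeff r) * X ^ r : Polynomial S) ∈ I by
      intro f hf r
      exact H f.natDegree f hf le_rfl r
    intro n
    induction n with
    | zero =>
      intro f hf hdeg r
      have hf0 : f = C (f.coeff 0) := eq_C_of_natDegree_eq_zero (Nat.le_zero.mp hdeg)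
      cases r with
      | zero => rw [pow_zero, mul_one, ← hf0]; exact hf
      | succ r =>
        have : f.coeff (r + 1) = 0 :=
          coeff_eq_zero_of_natDegree_lt (lt_of_le_of_lt hdeg (Nat.succ_pos r))
        rw [this, map_zero, zero_mul]
        exact I.zero_mem
    | succ n ih =>
      intro f hf hdeg r
      have hg : hasseDeriv (n + 1) f = C (f.coeff (n + 1)) := by
        ext m
        rw [hasseDeriv_coeff, coeff_C]
        cases m with
        | zero => simp
        | succ m =>
          have : f.coeff (m + 1 + (n + 1)) = 0 :=
            coeff_eq_zero_of_natDegree_lt (lt_of_le_of_lt hdeg (by omega))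
          simp [this]
      have hgI : (C (f.coeff (n + 1)) * X ^ (n + 1) : Polynomial S) ∈ I := by
        have := h (n + 1) f hf
        rwa [hg, mul_comm] at this
      have hf' : f - C (f.coeff (n + 1)) * X ^ (n + 1) ∈ I := I.sub_mem hf hgI
      have hdeg' : (f - C (f.coeff (n + 1)) * X ^ (n + 1)).natDegree ≤ n := by
        rw [natDegree_le_iff_coeff_eq_zero]
        intro m hm
        rw [coeff_sub, coeff_C_mul, coeff_X_pow]
        by_cases hmn : m = n + 1
        · subst hmn; simp
        · have : f.coeff m = 0 := coeff_eq_zero_of_natDegree_lt (lt_of_le_of_lt hdeg (by omega))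
          simp [this, hmn]
      by_cases hr : r = n + 1
      · subst hr; exact hgI
      · have hc : f.coeff r = (f - C (f.coeff (n + 1)) * X ^ (n + 1)).coeff r := by
          rw [coeff_sub, coeff_C_mul, coeff_X_pow]
          simp [hr]
        rw [hc]
        exact ih _ hf' hdeg' r
  · intro h α f hf
    rw [f.as_sum_support, map_sum, Finset.mul_sum]
    apply Ideal.sum_mem
    intro r _
    rw [hasseDeriv_monomial]
    by_cases hrα : α ≤ r
    · rw [mul_comm, monomial_mul_X_pow, Nat.sub_add_cancel hrα]
      have : (monomial r ((r.choose α : S) * f.coeff r) : Polynomial S) =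
          C (r.choose α : S) * (C (f.coeff r) * X ^ r) := by
        rw [C_mul_X_pow_eq_monomial, C_mul_monomial]
      rw [this]
      exact I.mul_mem_left _ (h f hf r)
    · have : r.choose α = 0 := Nat.choose_eq_zero_of_lt (by omega)
      rw [this, Nat.cast_zero, zero_mul, monomial_zero_right, mul_zero]
      exact I.zero_mem
end

section
/- Let k' be a field and consider the Rees algebra 𝓖 = ⊕_{r≥1} (t^{a_r}) W^r inside k'[[t]][W], with a_r ≥ r for all r, and set λ_𝓖 = inf_r (a_r / r). Then an element t^n W^m (m ≥ 1) is integral over 𝓖 if and only if n/m ≥ λ_𝓖. -/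
set_option synthInstance.maxHeartbeats 400000

open Polynomial

/-!
Write `t` for the variable of `k'⟦t⟧`. If `(t^n W^m)^s = t^{ns} W^{ms}` lies in `𝓖` for some
`s ≥ 1`, i.e. `a_{ms} ≤ ns`, then `t^n W^m` is integral; taking `s = r₀` and using
`a_{m r₀} ≤ m a_{r₀}` this happens as soon as `λ_𝓖 ≤ n/m`. Conversely, the coefficient of
`W^{mk}` in a monic equation of degree `k` for `t^n W^m` over `𝓖` reads
`t^{nk} + ∑_{i<k} c_i t^{ni} = 0` with `c_i ∈ (t^{a_{m(k-i)}})`. If `a_{ms} > ns` for every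
`s ≥ 1`, each term of the sum is divisible by `t^{nk+1}`, which is absurd; so `a_{ms} ≤ ns`
for some `s`, and then `λ_𝓖 ≤ a_{ms}/(ms) ≤ n/m`.
-/

section ReesAlg

variable {B : Type*} [CommRing B] {I : ℕ → Ideal B}

theorem C_mul_X_pow_mem_reesAlg {g : B} {n : ℕ} (hg : g ∈ I n) : C g * X ^ n ∈ ReesAlg I :=
  Algebra.subset_adjoin ⟨n, g, hg, rfl⟩

theorem coeff_mem_of_mem_reesAlg (hI0 : I 0 = ⊤) (hmul : ∀ i j, I i * I j ≤ I (i + j))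
    {p : B[X]} (hp : p ∈ ReesAlg I) (d : ℕ) : p.coeff d ∈ I d := by
  induction hp using Algebra.adjoin_induction generalizing d with
  | mem x hx =>
    obtain ⟨n, g, hg, rfl⟩ := hx
    rw [coeff_C_mul_X_pow]
    split_ifs with h
    · exact h ▸ hg
    · exact zero_mem _
  | algebraMap r =>
    rw [Polynomial.algebraMap_eq, coeff_C]
    split_ifs with h
    · simp [h, hI0]
    · exact zero_mem _
  | add x y _ _ hx hy => exact add_mem (hx d) (hy d)
  | mul x y _ _ hx hy =>
    rw [coeff_mul]
    refine Ideal.sum_mem _ fun ij hij => ?_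
    rw [← Finset.HasAntidiagonal.mem_antidiagonal.mp hij]
    exact hmul _ _ (Ideal.mul_mem_mul (hx ij.1) (hy ij.2))

theorem isIntegral_C_mul_X_pow_of_pow_mem {b : B} {m s : ℕ} (hs : 0 < s)
    (hb : b ^ s ∈ I (m * s)) : IsIntegral (ReesAlg I) (C b * X ^ m) := by
  refine IsIntegral.of_pow hs ?_
  have hmem : (C b * X ^ m) ^ s ∈ ReesAlg I := by
    rw [mul_pow, ← C_pow, ← pow_mul]
    exact C_mul_X_pow_mem_reesAlg hb
  exact isIntegral_algebraMap (x := (⟨_, hmem⟩ : ReesAlg I))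

theorem exists_sum_add_pow_eq_zero_of_isIntegral_C_mul_X_pow (hI0 : I 0 = ⊤)
    (hmul : ∀ i j, I i * I j ≤ I (i + j)) {b : B} {m : ℕ}
    (h : IsIntegral (ReesAlg I) (C b * X ^ m)) :
    ∃ (k : ℕ) (c : ℕ → B), (∀ i, c i ∈ I (m * (k - i))) ∧
      ∑ i ∈ Finset.range k, c i * b ^ i + b ^ k = 0 := by
  obtain ⟨p, hp_monic, hp⟩ := h
  set k := p.natDegree
  let c : ℕ → B := fun i => (p.coeff i : B[X]).coeff (m * (k - i))
  refine ⟨k, c, fun i => coeff_mem_of_mem_reesAlg hI0 hmul (p.coeff i).2 _, ?_⟩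
  have hterm : ∀ i ∈ Finset.range (k + 1),
      (algebraMap (ReesAlg I) B[X] (p.coeff i) * (C b * X ^ m) ^ i).coeff (m * k) =
        c i * b ^ i := by
    intro i hi
    have hik : m * i ≤ m * k := Nat.mul_le_mul_left m (Finset.mem_range_succ_iff.mp hi)
    rw [mul_pow, ← C_pow, ← pow_mul, ← mul_assoc, coeff_mul_X_pow', if_pos hik, coeff_mul_C,
      ← Nat.mul_sub]
    rfl
  have hcoeff := congrArg (coeff · (m * k)) hp
  simp only [eval₂_eq_sum_range, finsetSum_coeff, coeff_zero] at hcoeff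
  rw [Finset.sum_congr rfl hterm, Finset.sum_range_succ] at hcoeff
  have hlead : p.coeff k = 1 := hp_monic.coeff_natDegree
  simpa [c, hlead] using hcoeff

end ReesAlg

theorem apply_mul_le_mul_apply {a : ℕ → ℕ}
    (hsub : ∀ k s, 1 ≤ k → 1 ≤ s → a (k + s) ≤ a k + a s) {r M : ℕ} (hr : 1 ≤ r)
    (hM : 1 ≤ M) : a (M * r) ≤ M * a r := by
  induction M, hM using Nat.le_induction with
  | base => simp
  | succ M hM ih =>
    calc a ((M + 1) * r) = a (M * r + r) := by rw [add_mul, one_mul]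
      _ ≤ a (M * r) + a r := hsub _ _ (Nat.one_le_iff_ne_zero.mpr (by positivity)) hr
      _ ≤ (M + 1) * a r := by rw [add_mul, one_mul]; omega

theorem mul_le_add_of_eq_span_pow {R : Type*} [CommSemiring R] {I : ℕ → Ideal R} {a : ℕ → ℕ}
    {t : R} (hsub : ∀ k s, 1 ≤ k → 1 ≤ s → a (k + s) ≤ a k + a s)
    (hIr : ∀ r, 1 ≤ r → I r = Ideal.span {t ^ a r}) (i j : ℕ) :
    I i * I j ≤ I (i + j) := by
  rcases Nat.eq_zero_or_pos i with rfl | hi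
  · rw [zero_add]; exact Ideal.mul_le_right
  rcases Nat.eq_zero_or_pos j with rfl | hj
  · rw [add_zero]; exact Ideal.mul_le_left
  rw [hIr i hi, hIr j hj, hIr (i + j) (by omega), Ideal.span_singleton_mul_span_singleton,
    Ideal.span_singleton_le_span_singleton, ← pow_add]
  exact pow_dvd_pow _ (hsub i j hi hj)

theorem exists_le_of_isIntegral_C_pow_mul_X_pow {R : Type*} [CommRing R] [IsDomain R]
    {I : ℕ → Ideal R} {a : ℕ → ℕ} {t : R} (ht0 : t ≠ 0) (ht : ¬IsUnit t)
    (hsub : ∀ k s, 1 ≤ k → 1 ≤ s → a (k + s) ≤ a k + a s) (hI0 : I 0 = ⊤)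
    (hIr : ∀ r, 1 ≤ r → I r = Ideal.span {t ^ a r}) {n m : ℕ} (hm : 1 ≤ m)
    (h : IsIntegral (ReesAlg I) (C (t ^ n) * X ^ m)) :
    ∃ s, 1 ≤ s ∧ a (m * s) ≤ n * s := by
  obtain ⟨k, c, hc, hsum⟩ := exists_sum_add_pow_eq_zero_of_isIntegral_C_mul_X_pow hI0
    (mul_le_add_of_eq_span_pow hsub hIr) h
  by_contra! hlt
  have hdvd : t ^ (n * k + 1) ∣ (t ^ n) ^ k := by
    rw [eq_neg_of_add_eq_zero_right hsum, dvd_neg]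
    refine Finset.dvd_sum fun i hi => ?_
    have hik : i < k := Finset.mem_range.mp hi
    have hci := hc i
    rw [hIr _ (Nat.mul_pos hm (by omega)), Ideal.mem_span_singleton] at hci
    have hexp : n * k + 1 = (n * (k - i) + 1) + n * i := by
      rw [Nat.mul_sub]; have := Nat.mul_le_mul_left n hik.le; omega
    rw [hexp, pow_add, ← pow_mul]
    exact mul_dvd_mul ((pow_dvd_pow _ (hlt _ (by omega))).trans hci) dvd_rfl
  rw [← pow_mul, pow_dvd_pow_iff ht0 ht] at hdvd
  omega

theorem stmt_10_general (k' : Type*) [Field k'] (a : ℕ → ℕ)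
    (hsub : ∀ k s, 1 ≤ k → 1 ≤ s → a (k + s) ≤ a k + a s)
    (I : ℕ → Ideal (PowerSeries k'))
    (hI0 : I 0 = ⊤)
    (hIr : ∀ r, 1 ≤ r → I r = Ideal.span {(PowerSeries.X : PowerSeries k') ^ a r})
    (r0 : ℕ) (hr0 : 1 ≤ r0)
    (hmin : ∀ r, 1 ≤ r → (a r0 : ℚ) / (r0 : ℚ) ≤ (a r : ℚ) / (r : ℚ))
    (n m : ℕ) (hm : 1 ≤ m) :
    IsIntegral (ReesAlg I)
        ((C ((PowerSeries.X : PowerSeries k') ^ n) * X ^ m : Polynomial (PowerSeries k'))) ↔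
      (a r0 : ℚ) / (r0 : ℚ) ≤ (n : ℚ) / (m : ℚ) := by
  have hm' : (0 : ℚ) < m := by exact_mod_cast hm
  constructor
  · intro h
    obtain ⟨s, hs, hle⟩ := exists_le_of_isIntegral_C_pow_mul_X_pow
      PowerSeries.X_prime.ne_zero PowerSeries.X_prime.not_isUnit hsub hI0 hIr hm h
    have hs' : (0 : ℚ) < s := by exact_mod_cast hs
    refine (hmin (m * s) (Nat.mul_pos hm hs)).trans ?_
    rw [div_le_div_iff₀ (by positivity) hm']
    have hle' : (a (m * s) : ℚ) ≤ n * s := by exact_mod_cast hle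
    push_cast
    nlinarith
  · intro h
    rw [div_le_div_iff₀ (by exact_mod_cast hr0) hm'] at h
    have hle : m * a r0 ≤ n * r0 := by exact_mod_cast (by linarith : (m : ℚ) * a r0 ≤ n * r0)
    refine isIntegral_C_mul_X_pow_of_pow_mem hr0 ?_
    rw [hIr _ (Nat.mul_pos hm hr0), Ideal.mem_span_singleton, ← pow_mul]
    exact pow_dvd_pow _ ((apply_mul_le_mul_apply hsub hr0 hm).trans hle)

/-- For the Rees algebra `𝓖 = ⊕_{r≥1} (t^{a_r}) W^r ⊆ k'[[t]][W]` with `a_r ≥ r` and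
`λ_𝓖 = inf_r a_r/r` (attained at `r₀`), the element `t^n W^m` (`m ≥ 1`) is integral
over `𝓖` if and only if `n/m ≥ λ_𝓖`. -/
theorem stmt_10 (k' : Type*) [Field k'] (a : ℕ → ℕ)
    (ha : ∀ r, 1 ≤ r → r ≤ a r)
    (hsub : ∀ k s, 1 ≤ k → 1 ≤ s → a (k + s) ≤ a k + a s)
    (I : ℕ → Ideal (PowerSeries k'))
    (hI0 : I 0 = ⊤)
    (hIr : ∀ r, 1 ≤ r → I r = Ideal.span {(PowerSeries.X : PowerSeries k') ^ a r})
    (r0 : ℕ) (hr0 : 1 ≤ r0)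
    (hmin : ∀ r, 1 ≤ r → (a r0 : ℚ) / (r0 : ℚ) ≤ (a r : ℚ) / (r : ℚ))
    (n m : ℕ) (hm : 1 ≤ m) :
    IsIntegral (ReesAlg I)
        ((C ((PowerSeries.X : PowerSeries k') ^ n) * X ^ m : Polynomial (PowerSeries k'))) ↔
      (a r0 : ℚ) / (r0 : ℚ) ≤ (n : ℚ) / (m : ℚ) :=
  stmt_10_general k' a hsub I hI0 hIr r0 hr0 hmin n m hm
end

section
/- Let S be a commutative ring, B = S[X], and let 𝓖 = ⊕ I_n W^n ⊆ B[W] be a Rees algebra generated by a finite set 𝓕 = {g_{n_i} W^{n_i}}. Then the smallest Diff-algebra (relative to S) containing 𝓖 is generated as a B-algebra by the finite set 𝓕' = {Δ^α(g_{n_i}) W^{n'_i − α} : g_{n_i} W^{n_i} ∈ 𝓕, 0 < n'_i ≤ n_i, 0 ≤ α < n'_i}. In particular every finitely generated Rees algebra over B admits a smallest finitely generated Diff-algebra extension. -/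
open Polynomial

/-- A graded subalgebra `A ⊆ B[W]` (for `B = S[X]`) is a Diff-algebra relative to `S` if
its homogeneous pieces decrease and are stable under `b W^n ↦ Δ^α(b) W^{n-α}`. -/
def IsDiffAlg {S : Type*} [CommRing S]
    (A : Subalgebra (Polynomial S) (Polynomial (Polynomial S))) : Prop :=
  (∀ (b : Polynomial S) (k : ℕ),
    (C b * X ^ (k + 1) : Polynomial (Polynomial S)) ∈ A →
      (C b * X ^ k : Polynomial (Polynomial S)) ∈ A) ∧
  (∀ (b : Polynomial S) (n α : ℕ), α ≤ n →
    (C b * X ^ n : Polynomial (Polynomial S)) ∈ A →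
      (C (hasseDeriv α b) * X ^ (n - α) : Polynomial (Polynomial S)) ∈ A)

/-! A Diff-algebra containing `g_i W^{n_i}` contains `g_i W^{n'}` for `n' ≤ n_i`, hence
`Δ^α(g_i) W^{n'-α}`: so every generator of `D` lies in it. Conversely `D` is a Diff-algebra
because it lies in the subalgebra of all `p = ∑ p_k W^k` with `Δ^α(p_k) W^j ∈ D` for
`j + α ≤ k`. That set is closed under products by the Leibniz rule
`Δ^α(fg) = ∑_{β+γ=α} Δ^β f Δ^γ g`, splitting `W^j = W^{j₁} W^{j₂}` with `j₁ + β ≤ a`,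
`j₂ + γ ≤ b` in each term of `(pq)_k = ∑_{a+b=k} p_a q_b`; and it contains the generators of `D`
since `Δ^α ∘ Δ^β = (α+β).choose α • Δ^{α+β}`. -/

section

variable {S : Type*} [CommSemiring S]

theorem Subalgebra.C_mem (A : Subalgebra S[X] S[X][X]) (b : S[X]) : C b ∈ A :=
  A.algebraMap_mem b

/-- With truncated subtraction, `α > k` only asks for `j = 0`, a constant, which lies in `A`. -/
noncomputable def Subalgebra.hasseDerivCoeffs (A : Subalgebra S[X] S[X][X]) :
    Subalgebra S[X] S[X][X] where
  carrier := {p | ∀ k α j, j ≤ k - α → C (hasseDeriv α (p.coeff k)) * X ^ j ∈ A}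
  algebraMap_mem' r k α j hj := by
    rcases eq_or_ne k 0 with rfl | hk
    · obtain rfl : j = 0 := by omega
      simpa using A.C_mem (hasseDeriv α r)
    · simp [Polynomial.algebraMap_eq, coeff_C, hk]
  add_mem' {x y} hx hy k α j hj := by
    simpa only [coeff_add, map_add, add_mul] using add_mem (hx k α j hj) (hy k α j hj)
  mul_mem' {x y} hx hy k α j hj := by
    simp only [coeff_mul, map_sum, hasseDeriv_mul, Finset.sum_mul]
    refine sum_mem fun ab hab => sum_mem fun βγ hβγ => ?_
    rw [Finset.HasAntidiagonal.mem_antidiagonal] at hab hβγ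
    obtain ⟨j₁, j₂, rfl, h₁, h₂⟩ : ∃ j₁ j₂, j = j₁ + j₂ ∧ j₁ ≤ ab.1 - βγ.1 ∧ j₂ ≤ ab.2 - βγ.2 :=
      ⟨min j (ab.1 - βγ.1), j - min j (ab.1 - βγ.1), by omega, by omega, by omega⟩
    rw [map_mul, pow_add, mul_mul_mul_comm]
    exact mul_mem (hx _ _ _ h₁) (hy _ _ _ h₂)

theorem Subalgebra.C_mul_X_pow_mem_of_mem_hasseDerivCoeffs {A : Subalgebra S[X] S[X][X]}
    {b : S[X]} {n : ℕ} (h : C b * X ^ n ∈ A.hasseDerivCoeffs) {α j : ℕ} (hj : j ≤ n - α) :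
    C (hasseDeriv α b) * X ^ j ∈ A := by
  simpa using h n α j hj

end

section

variable {S : Type*} [CommRing S] {A : Subalgebra S[X] S[X][X]}

theorem isDiffAlg_of_le_hasseDerivCoeffs (h : A ≤ A.hasseDerivCoeffs) : IsDiffAlg A :=
  ⟨fun b k hb => by
    simpa using Subalgebra.C_mul_X_pow_mem_of_mem_hasseDerivCoeffs (h hb) (α := 0) (j := k)
      (by omega),
   fun b n α _ hb => Subalgebra.C_mul_X_pow_mem_of_mem_hasseDerivCoeffs (h hb) le_rfl⟩

theorem IsDiffAlg.C_mul_X_pow_mem_of_le (hA : IsDiffAlg A) {b : S[X]} {n k : ℕ}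
    (hb : C b * X ^ n ∈ A) (hk : k ≤ n) : C b * X ^ k ∈ A :=
  Nat.decreasingInduction (motive := fun k _ => C b * X ^ k ∈ A)
    (fun k _ ih => hA.1 b k ih) hb hk

end

section

variable {S : Type*} [CommRing S] {ι : Type*} (g : ι → S[X]) (n : ι → ℕ)

/-- The set `𝓕'` of the paper. -/
def diffGenerators : Set S[X][X] :=
  {p | ∃ (i : ι) (n' α : ℕ), 0 < n' ∧ n' ≤ n i ∧ α < n' ∧
    p = (C (hasseDeriv α (g i)) * X ^ (n' - α) : S[X][X])}

theorem diffGenerators_subset_hasseDerivCoeffs :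
    diffGenerators g n ⊆ (Algebra.adjoin S[X] (diffGenerators g n)).hasseDerivCoeffs := by
  rintro _ ⟨i, n', β, -, hn', hβ, rfl⟩ k α j hj
  rcases eq_or_ne k (n' - β) with rfl | hk
  · have hcomp : hasseDeriv α (hasseDeriv β (g i)) = (α + β).choose α • hasseDeriv (α + β) (g i) :=
      congr($(hasseDeriv_comp (R := S) α β) (g i))
    rw [coeff_C_mul_X_pow, if_pos rfl, hcomp, map_nsmul, smul_mul_assoc]
    refine nsmul_mem ?_ _
    rcases Nat.eq_zero_or_pos j with rfl | hj₀
    · simpa using Subalgebra.C_mem _ _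
    · exact Algebra.subset_adjoin ⟨i, j + (α + β), α + β, by omega, by omega, by omega,
        by rw [Nat.add_sub_cancel]⟩
  · simp [hk]

theorem isDiffAlg_adjoin_diffGenerators : IsDiffAlg (Algebra.adjoin S[X] (diffGenerators g n)) :=
  isDiffAlg_of_le_hasseDerivCoeffs <|
    Algebra.adjoin_le (diffGenerators_subset_hasseDerivCoeffs g n)

theorem adjoin_le_adjoin_diffGenerators (hn : ∀ i, 0 < n i) :
    Algebra.adjoin S[X] {p | ∃ i, p = (C (g i) * X ^ (n i) : S[X][X])} ≤
      Algebra.adjoin S[X] (diffGenerators g n) :=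
  Algebra.adjoin_mono <| by
    rintro _ ⟨i, rfl⟩
    exact ⟨i, n i, 0, hn i, le_rfl, hn i, by rw [hasseDeriv_zero', Nat.sub_zero]⟩

theorem adjoin_diffGenerators_le {A : Subalgebra S[X] S[X][X]} (hA : IsDiffAlg A)
    (hg : ∀ i, C (g i) * X ^ (n i) ∈ A) : Algebra.adjoin S[X] (diffGenerators g n) ≤ A := by
  refine Algebra.adjoin_le ?_
  rintro _ ⟨i, n', α, -, hn', hα, rfl⟩
  exact hA.2 _ _ α hα.le (hA.C_mul_X_pow_mem_of_le (hg i) hn')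

end

theorem stmt_17_general (S : Type*) [CommRing S] (I : ℕ → Ideal (Polynomial S))
    (m : ℕ) (g : Fin m → Polynomial S) (n : Fin m → ℕ) (hn : ∀ i, 0 < n i)
    (hgen : ReesAlg I = Algebra.adjoin (Polynomial S)
      {p | ∃ i : Fin m, p = (C (g i) * X ^ (n i) : Polynomial (Polynomial S))})
    (D : Subalgebra (Polynomial S) (Polynomial (Polynomial S)))
    (hD : D = Algebra.adjoin (Polynomial S)
      {p | ∃ (i : Fin m) (n' α : ℕ), 0 < n' ∧ n' ≤ n i ∧ α < n' ∧
        p = (C (hasseDeriv α (g i)) * X ^ (n' - α) : Polynomial (Polynomial S))}) :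
    ReesAlg I ≤ D ∧ IsDiffAlg D ∧
      ∀ A : Subalgebra (Polynomial S) (Polynomial (Polynomial S)),
        IsDiffAlg A → ReesAlg I ≤ A → D ≤ A := by
  change D = Algebra.adjoin _ (diffGenerators g n) at hD
  subst hD
  rw [hgen]
  exact ⟨adjoin_le_adjoin_diffGenerators g n hn, isDiffAlg_adjoin_diffGenerators g n,
    fun A hA hG => adjoin_diffGenerators_le g n hA fun i => hG (Algebra.subset_adjoin ⟨i, rfl⟩)⟩

/-- If the Rees algebra `𝓖 = ⊕ Iₙ Wⁿ ⊆ B[W]` (for `B = S[X]`) is generated by a finite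
set `𝓕 = {g_i W^{n_i}}`, then the `B`-subalgebra generated by the finite set
`𝓕' = {Δ^α(g_i) W^{n'_i - α} : 0 < n'_i ≤ n_i, 0 ≤ α < n'_i}` is the smallest
Diff-algebra relative to `S` containing `𝓖`. -/
theorem stmt_17 (S : Type*) [CommRing S] (I : ℕ → Ideal (Polynomial S))
    (h0 : I 0 = ⊤) (hmul : ∀ k s : ℕ, I k * I s ≤ I (k + s))
    (m : ℕ) (g : Fin m → Polynomial S) (n : Fin m → ℕ) (hn : ∀ i, 0 < n i)
    (hgI : ∀ i, g i ∈ I (n i))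
    (hgen : ReesAlg I = Algebra.adjoin (Polynomial S)
      {p | ∃ i : Fin m, p = (C (g i) * X ^ (n i) : Polynomial (Polynomial S))})
    (D : Subalgebra (Polynomial S) (Polynomial (Polynomial S)))
    (hD : D = Algebra.adjoin (Polynomial S)
      {p | ∃ (i : Fin m) (n' α : ℕ), 0 < n' ∧ n' ≤ n i ∧ α < n' ∧
        p = (C (hasseDeriv α (g i)) * X ^ (n' - α) : Polynomial (Polynomial S))}) :
    ReesAlg I ≤ D ∧ IsDiffAlg D ∧
      ∀ A : Subalgebra (Polynomial S) (Polynomial (Polynomial S)),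
        IsDiffAlg A → ReesAlg I ≤ A → D ≤ A :=
  stmt_17_general S I m g n hn hgen D hD
end

section
/- Let k'' be an infinite field and a, b positive integers. Let f ∈ k'[[x_1,…,x_{d−1}, x_d]] (k' ⊆ k'') be a formal power series whose support is contained in the half-space {(α, s) : a|α| + b s ≥ aN} and meets the hyperplane a|α| + b s = aN, where |α| = α_1+⋯+α_{d−1}. Then for sufficiently general λ_1,…,λ_{d−1} ∈ k'', the substitution β(f) ∈ k''[[t]] defined by x_i ↦ λ_i t^a (i < d), x_d ↦ t^b has order exactly aN; and if the support of f is not contained in that half-space, then for general λ_i the order of β(f) is strictly less than aN. -/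
/-- The substitution `β : k'[[x₁,…,x_e,x_d]] → k''[[t]]` determined by
`x_i ↦ λ_i t^a` (for `i ≤ e`) and `x_d ↦ t^b`, described on coefficients: the
coefficient of `t^N` in `β(f)` is `Σ_{a|α|+bs=N} (∏ λ_i^{α_i}) ι(coeff_{(α,s)} f)`. -/
noncomputable def weightedSubst (e a b : ℕ) {k' k'' : Type*} [CommRing k'] [CommRing k'']
    (ι : k' →+* k'') (lam : Fin e → k'') (f : MvPowerSeries (Fin (e + 1)) k') :
    PowerSeries k'' :=
  PowerSeries.mk fun N =>
    ∑ γ ∈ (Finset.Iic (Finsupp.equivFunOnFinite.symm fun _ : Fin (e + 1) => N)).filter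
        (fun γ => a * (∑ i : Fin e, γ (Fin.castSucc i)) + b * γ (Fin.last e) = N),
      (∏ i : Fin e, lam i ^ γ (Fin.castSucc i)) * ι (MvPowerSeries.coeff γ f)

/-!
The coefficient of `t^M` in `β(f)` is the value at `λ` of the polynomial
`P_M = Σ_{a|α|+bs=M} ι(f_{(α,s)}) λ^α`. Since `b > 0`, the exponent `α` determines `s` on the
hyperplane `a|α| + bs = M`, so distinct monomials of `f` on it give distinct monomials of `P_M`;
hence `P_M ≠ 0` as soon as the support of `f` meets the hyperplane, and off the zero locus of
`P_M` the series `β(f)` has a nonzero coefficient in degree `M`. Coefficients below the minimal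
weight of the support vanish identically.
-/

open MvPolynomial

section WeightedSubst

variable {e : ℕ} (a b : ℕ)

noncomputable def weightedDegree (γ : Fin (e + 1) →₀ ℕ) : ℕ :=
  a * (∑ i : Fin e, γ (Fin.castSucc i)) + b * γ (Fin.last e)

noncomputable def initExponent (γ : Fin (e + 1) →₀ ℕ) : Fin e →₀ ℕ :=
  Finsupp.equivFunOnFinite.symm fun i => γ (Fin.castSucc i)

variable {a b}

lemma le_const_of_weightedDegree_eq (ha : 0 < a) (hb : 0 < b) {γ : Fin (e + 1) →₀ ℕ} {M : ℕ}
    (hγ : weightedDegree a b γ = M) :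
    γ ≤ Finsupp.equivFunOnFinite.symm fun _ => M := by
  refine Finsupp.le_def.mpr fun i => ?_
  rw [Finsupp.coe_equivFunOnFinite_symm, ← hγ, weightedDegree]
  induction i using Fin.lastCases with
  | last => exact (Nat.le_mul_of_pos_left _ hb).trans (Nat.le_add_left _ _)
  | cast i =>
    calc γ (Fin.castSucc i) ≤ ∑ j : Fin e, γ (Fin.castSucc j) :=
          Finset.single_le_sum (f := fun j => γ (Fin.castSucc j)) (fun _ _ => Nat.zero_le _)
            (Finset.mem_univ i)
      _ ≤ a * ∑ j : Fin e, γ (Fin.castSucc j) := Nat.le_mul_of_pos_left _ ha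
      _ ≤ _ := Nat.le_add_right _ _

lemma eq_of_initExponent_eq (hb : 0 < b) {γ γ' : Fin (e + 1) →₀ ℕ}
    (hdeg : weightedDegree a b γ = weightedDegree a b γ')
    (hinit : initExponent γ = initExponent γ') : γ = γ' := by
  have hcast (i : Fin e) : γ (Fin.castSucc i) = γ' (Fin.castSucc i) :=
    congrArg (· i) (Finsupp.equivFunOnFinite.symm.injective hinit)
  have hlast : γ (Fin.last e) = γ' (Fin.last e) := by
    simp only [weightedDegree, hcast, add_right_inj] at hdeg
    exact Nat.eq_of_mul_eq_mul_left hb hdeg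
  ext i
  induction i using Fin.lastCases with
  | last => exact hlast
  | cast i => exact hcast i

variable {k' k'' : Type*} [CommRing k'] [CommRing k'']

variable (a b) in
noncomputable def weightedSubstCoeffPoly (ι : k' →+* k'') (f : MvPowerSeries (Fin (e + 1)) k')
    (M : ℕ) : MvPolynomial (Fin e) k'' :=
  ∑ γ ∈ (Finset.Iic (Finsupp.equivFunOnFinite.symm fun _ : Fin (e + 1) => M)).filter
      (fun γ => weightedDegree a b γ = M),
    monomial (initExponent γ) (ι (MvPowerSeries.coeff γ f))

lemma eval_weightedSubstCoeffPoly (ι : k' →+* k'') (f : MvPowerSeries (Fin (e + 1)) k')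
    (lam : Fin e → k'') (M : ℕ) :
    eval lam (weightedSubstCoeffPoly a b ι f M) =
      PowerSeries.coeff M (weightedSubst e a b ι lam f) := by
  rw [weightedSubstCoeffPoly, map_sum, weightedSubst, PowerSeries.coeff_mk]
  refine Finset.sum_congr rfl fun γ _ => ?_
  rw [eval_monomial, initExponent, Finsupp.prod_pow, mul_comm]
  simp only [Finsupp.coe_equivFunOnFinite_symm]

lemma coeff_initExponent_weightedSubstCoeffPoly (ha : 0 < a) (hb : 0 < b) (ι : k' →+* k'')
    (f : MvPowerSeries (Fin (e + 1)) k') (γ : Fin (e + 1) →₀ ℕ) :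
    coeff (initExponent γ) (weightedSubstCoeffPoly a b ι f (weightedDegree a b γ)) =
      ι (MvPowerSeries.coeff γ f) := by
  have hmem : γ ∈ (Finset.Iic (Finsupp.equivFunOnFinite.symm
      fun _ : Fin (e + 1) => weightedDegree a b γ)).filter
        (fun γ' => weightedDegree a b γ' = weightedDegree a b γ) :=
    Finset.mem_filter.mpr ⟨Finset.mem_Iic.mpr (le_const_of_weightedDegree_eq ha hb rfl), rfl⟩
  rw [weightedSubstCoeffPoly, coeff_sum, Finset.sum_eq_single_of_mem γ hmem, coeff_monomial,
    if_pos rfl]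
  intro γ' hγ' hne
  rw [coeff_monomial, if_neg fun hinit => hne <|
    eq_of_initExponent_eq hb (Finset.mem_filter.mp hγ').2 hinit]

lemma weightedSubstCoeffPoly_ne_zero (ha : 0 < a) (hb : 0 < b) {ι : k' →+* k''}
    (hι : Function.Injective ι) {f : MvPowerSeries (Fin (e + 1)) k'} {γ : Fin (e + 1) →₀ ℕ}
    (hγ : MvPowerSeries.coeff γ f ≠ 0) :
    weightedSubstCoeffPoly a b ι f (weightedDegree a b γ) ≠ 0 := by
  intro h0
  have := coeff_initExponent_weightedSubstCoeffPoly ha hb ι f γ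
  rw [h0, coeff_zero, eq_comm, map_eq_zero_iff ι hι] at this
  exact hγ this

lemma coeff_weightedSubst_eq_zero_of_lt (ι : k' →+* k'') (lam : Fin e → k'')
    {f : MvPowerSeries (Fin (e + 1)) k'} {M n : ℕ}
    (hsupp : ∀ γ, MvPowerSeries.coeff γ f ≠ 0 → M ≤ weightedDegree a b γ) (hn : n < M) :
    PowerSeries.coeff n (weightedSubst e a b ι lam f) = 0 := by
  rw [weightedSubst, PowerSeries.coeff_mk]
  refine Finset.sum_eq_zero fun γ hγ => ?_
  have hzero : MvPowerSeries.coeff γ f = 0 := by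
    by_contra hne
    have hdeg : weightedDegree a b γ = n := (Finset.mem_filter.mp hγ).2
    exact (hn.trans_le (hsupp γ hne)).ne hdeg.symm
  rw [hzero, map_zero, mul_zero]

end WeightedSubst

theorem stmt_18_general (e a b : ℕ) (hapos : 0 < a) (hbpos : 0 < b)
    {k' k'' : Type*} [Field k'] [Field k''] (ι : k' →+* k'')
    (f : MvPowerSeries (Fin (e + 1)) k') (N : ℕ) :
    ((∀ γ : Fin (e + 1) →₀ ℕ, MvPowerSeries.coeff γ f ≠ 0 →
        a * N ≤ a * (∑ i : Fin e, γ (Fin.castSucc i)) + b * γ (Fin.last e)) →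
      (∃ γ : Fin (e + 1) →₀ ℕ, MvPowerSeries.coeff γ f ≠ 0 ∧
        a * (∑ i : Fin e, γ (Fin.castSucc i)) + b * γ (Fin.last e) = a * N) →
      ∃ P : MvPolynomial (Fin e) k'', P ≠ 0 ∧
        ∀ lam : Fin e → k'', MvPolynomial.eval lam P ≠ 0 →
          (weightedSubst e a b ι lam f).order = (a * N : ℕ)) ∧
    ((∃ γ : Fin (e + 1) →₀ ℕ, MvPowerSeries.coeff γ f ≠ 0 ∧
        a * (∑ i : Fin e, γ (Fin.castSucc i)) + b * γ (Fin.last e) < a * N) →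
      ∃ P : MvPolynomial (Fin e) k'', P ≠ 0 ∧
        ∀ lam : Fin e → k'', MvPolynomial.eval lam P ≠ 0 →
          (weightedSubst e a b ι lam f).order < (a * N : ℕ)) := by
  refine ⟨fun hsupp ⟨γ, hγ, hdeg⟩ => ?_, fun ⟨γ, hγ, hdeg⟩ => ?_⟩
  · change weightedDegree a b γ = a * N at hdeg
    refine ⟨_, weightedSubstCoeffPoly_ne_zero hapos hbpos ι.injective hγ, fun lam hlam => ?_⟩
    rw [eval_weightedSubstCoeffPoly, hdeg] at hlam
    exact PowerSeries.order_eq_nat.mpr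
      ⟨hlam, fun n hn => coeff_weightedSubst_eq_zero_of_lt ι lam hsupp hn⟩
  · refine ⟨_, weightedSubstCoeffPoly_ne_zero hapos hbpos ι.injective hγ, fun lam hlam => ?_⟩
    rw [eval_weightedSubstCoeffPoly] at hlam
    exact (PowerSeries.order_le _ hlam).trans_lt (by exact_mod_cast hdeg)

/-- Genericity of the weighted order under substitution: if the support of `f` lies in
the half-space `a|α| + bs ≥ aN` and meets the hyperplane `a|α| + bs = aN`, then for
sufficiently general `λ` (outside the zero locus of some nonzero polynomial) the order
of `β(f)` is exactly `aN`; and if the support is not contained in that half-space, then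
for general `λ` the order of `β(f)` is strictly smaller than `aN`. -/
theorem stmt_18 (e a b : ℕ) (hapos : 0 < a) (hbpos : 0 < b)
    {k' k'' : Type*} [Field k'] [Field k''] [Infinite k''] (ι : k' →+* k'')
    (f : MvPowerSeries (Fin (e + 1)) k') (N : ℕ) :
    ((∀ γ : Fin (e + 1) →₀ ℕ, MvPowerSeries.coeff γ f ≠ 0 →
        a * N ≤ a * (∑ i : Fin e, γ (Fin.castSucc i)) + b * γ (Fin.last e)) →
      (∃ γ : Fin (e + 1) →₀ ℕ, MvPowerSeries.coeff γ f ≠ 0 ∧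
        a * (∑ i : Fin e, γ (Fin.castSucc i)) + b * γ (Fin.last e) = a * N) →
      ∃ P : MvPolynomial (Fin e) k'', P ≠ 0 ∧
        ∀ lam : Fin e → k'', MvPolynomial.eval lam P ≠ 0 →
          (weightedSubst e a b ι lam f).order = (a * N : ℕ)) ∧
    ((∃ γ : Fin (e + 1) →₀ ℕ, MvPowerSeries.coeff γ f ≠ 0 ∧
        a * (∑ i : Fin e, γ (Fin.castSucc i)) + b * γ (Fin.last e) < a * N) →
      ∃ P : MvPolynomial (Fin e) k'', P ≠ 0 ∧
        ∀ lam : Fin e → k'', MvPolynomial.eval lam P ≠ 0 →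
          (weightedSubst e a b ι lam f).order < (a * N : ℕ)) :=
  stmt_18_general e a b hapos hbpos ι f N
end
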